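/- Let β ≥ 0 be real and m ∈ ℕ. Then the moment ratio of the Euler (factorial) moment sequence μ_m = m! admits the inverse factorial expansion 1/(m+1) = Σ_{k=0}^{∞} (β−1)_k/(m+β)_{k+1}, the series on the right converging (absolutely) whenever m + β > 0. -/

import Mathlib

/-- The Pochhammer symbol `(x)_j = x(x+1)⋯(x+j−1)`, with `(x)_0 = 1`. -/
noncomputable def poch (x : ℝ) (j : ℕ) : ℝ := ∏ i ∈ Finset.range j, (x + i)

lemma poch_succ (x : ℝ) (n : ℕ) : poch x (n + 1) = poch x n * (x + n) := by
  simp [poch, Finset.prod_range_succ]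

lemma poch_add (x : ℝ) (a b : ℕ) : poch x (a + b) = poch x a * poch (x + a) b := by
  simp only [poch, Finset.prod_range_add]
  congr 1
  apply Finset.prod_congr rfl
  intro i _
  push_cast
  ring

lemma poch_pos {x : ℝ} (hx : 0 < x) (n : ℕ) : 0 < poch x n := by
  apply Finset.prod_pos
  intro i _
  have : (0:ℝ) ≤ i := Nat.cast_nonneg i
  linarith

lemma le_poch {y : ℝ} (hy : 1 ≤ y) (j : ℕ) : y ≤ poch y (j + 1) := by
  induction j with
  | zero => simp [poch]
  | succ j ih =>
    rw [poch_succ]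
    have h0 : (0:ℝ) ≤ (j+1 : ℕ) := Nat.cast_nonneg _
    nlinarith [ih]

-- key: poch (β-1) k * poch (β-1+k) (m+1) = poch (β-1) (m+1) * poch (m+β) k
lemma keyA (β : ℝ) (m k : ℕ) :
    poch (β-1) k * poch (β-1+k) (m+1) = poch (β-1) (m+1) * poch ((m:ℝ)+β) k := by
  have h1 := poch_add (β-1) k (m+1)
  have h2 := poch_add (β-1) (m+1) k
  rw [Nat.add_comm k (m+1)] at h1
  have e : β - 1 + ((m:ℕ)+1 : ℕ) = (m:ℝ) + β := by push_cast; ring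
  rw [e] at h2
  linarith [h1, h2]

-- telescoping identity
lemma tele (β : ℝ) (m : ℕ) (hmβ : 0 < (m:ℝ)+β) (k : ℕ) :
    poch (β-1) k / poch ((m:ℝ)+β) (k+1)
      = (poch (β-1) k / poch ((m:ℝ)+β) k - poch (β-1) (k+1) / poch ((m:ℝ)+β) (k+1))
        / ((m:ℝ)+1) := by
  have hQ : 0 < poch ((m:ℝ)+β) k := poch_pos hmβ k
  have hk : (0:ℝ) ≤ (k:ℕ) := Nat.cast_nonneg k
  have hx : (0:ℝ) < (m:ℝ)+β+k := by linarith
  have hm1 : (0:ℝ) < (m:ℝ)+1 := by positivity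
  rw [poch_succ (β-1), poch_succ ((m:ℝ)+β)]
  field_simp
  ring

/-- The moment ratio `μ_m/μ_{m+1} = 1/(m+1)` of the Euler (factorial) moment sequence
`μ_m = m!` admits the inverse factorial expansion
`1/(m+1) = Σ_{k=0}^{∞} (β−1)_k/(m+β)_{k+1}`, the series converging absolutely
whenever `m + β > 0` (here `β ≥ 0`). -/
theorem euler_moment_ratio_inverse_factorial_expansion
    (β : ℝ) (hβ : 0 ≤ β) (m : ℕ) (hmβ : 0 < (m : ℝ) + β) :
    Summable (fun k : ℕ => |poch (β - 1) k / poch ((m : ℝ) + β) (k + 1)|)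
    ∧ 1 / ((m : ℝ) + 1) = ∑' k : ℕ, poch (β - 1) k / poch ((m : ℝ) + β) (k + 1) := by
  set c : ℝ := poch (β-1) (m+1) with hc
  set term : ℕ → ℝ := fun k => poch (β - 1) k / poch ((m : ℝ) + β) (k + 1) with hterm
  set a : ℕ → ℝ := fun k => poch (β - 1) k / poch ((m : ℝ) + β) k with ha
  have hQ : ∀ k, 0 < poch ((m:ℝ)+β) k := fun k => poch_pos hmβ k
  -- |a n| = |c| / poch (β-1+n) (m+1) whenever β-1+n > 0
  have habs : ∀ n : ℕ, 0 < β - 1 + n → |a n| = |c| / poch (β-1+(n:ℝ)) (m+1) := by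
    intro n hn
    have hP : 0 < poch (β-1+(n:ℝ)) (m+1) := poch_pos hn _
    have hk := keyA β m n
    have : |poch (β-1) n| * poch (β-1+(n:ℝ)) (m+1) = |c| * poch ((m:ℝ)+β) n := by
      have := congrArg abs hk
      rwa [abs_mul, abs_mul, abs_of_pos hP, abs_of_pos (hQ n)] at this
    have : |poch (β-1) n| = |c| * poch ((m:ℝ)+β) n / poch (β-1+(n:ℝ)) (m+1) := by
      field_simp at this ⊢
      linarith
    simp only [ha, abs_div, abs_of_pos (hQ n), this]
    have hQn := (hQ n).ne'
    have hP' := hP.ne'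
    field_simp
  -- |a n| ≤ |c| / (n - 1) for n ≥ 2
  have habs_le : ∀ n : ℕ, 2 ≤ n → |a n| ≤ |c| / ((n:ℝ) - 1) := by
    intro n hn
    have hn' : (2:ℝ) ≤ (n:ℕ) := by exact_mod_cast hn
    have hpos : 0 < β - 1 + n := by linarith
    rw [habs n hpos]
    have h1 : (1:ℝ) ≤ β - 1 + n := by linarith
    have hle : (n:ℝ) - 1 ≤ poch (β-1+(n:ℝ)) (m+1) := by
      have := le_poch h1 m
      linarith
    exact div_le_div_of_nonneg_left (abs_nonneg c) (by linarith) hle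
  -- term k = a k / (m+β+k)
  have hterm_a : ∀ k, term k = a k / ((m:ℝ)+β+k) := by
    intro k
    simp only [hterm, ha, poch_succ ((m:ℝ)+β)]
    rw [div_div]
  -- summability
  have hsummable : Summable (fun k : ℕ => |term k|) := by
    rw [← summable_nat_add_iff 2]
    have hbase : Summable (fun j : ℕ => |c| / ((j:ℝ)+1)^2) := by
      apply Summable.mul_left
      have h2 : Summable (fun j : ℕ => 1 / ((j:ℝ))^2) :=
        Real.summable_one_div_nat_pow.mpr (by norm_num)
      have := (summable_nat_add_iff 1).mpr h2
      exact this.congr (fun j => by push_cast; ring)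
    apply Summable.of_nonneg_of_le (fun j => abs_nonneg _) _ hbase
    intro j
    have hj1 : (0:ℝ) ≤ (j:ℕ) := Nat.cast_nonneg j
    have h2j : 2 ≤ j + 2 := by omega
    have hcast : ((j+2:ℕ):ℝ) = (j:ℝ) + 2 := by push_cast; ring
    have hA : |a (j+2)| ≤ |c| / ((j:ℝ)+1) := by
      have := habs_le (j+2) h2j
      rwa [hcast, show (j:ℝ) + 2 - 1 = (j:ℝ)+1 by ring] at this
    have hd : (0:ℝ) < (m:ℝ)+β+((j:ℝ)+2) := by linarith
    rw [hterm_a, hcast, abs_div, abs_of_pos hd]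
    have h1 : |a (j+2)| / ((m:ℝ)+β+((j:ℝ)+2)) ≤ (|c| / ((j:ℝ)+1)) / ((j:ℝ)+1) := by
      apply div_le_div₀ (by positivity) hA (by linarith)
      linarith
    calc |a (j+2)| / ((m:ℝ)+β+((j:ℝ)+2)) ≤ (|c| / ((j:ℝ)+1)) / ((j:ℝ)+1) := h1
      _ = |c| / ((j:ℝ)+1)^2 := by rw [div_div]; ring_nf
  refine ⟨hsummable, ?_⟩
  -- partial sums
  have hpartial : ∀ n, ∑ k ∈ Finset.range n, term k = (1 - a n) / ((m:ℝ)+1) := by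
    intro n
    have : ∀ k ∈ Finset.range n, term k = (a k - a (k+1)) / ((m:ℝ)+1) := by
      intro k _
      exact tele β m hmβ k
    rw [Finset.sum_congr rfl this, ← Finset.sum_div, Finset.sum_range_sub' a n]
    have : a 0 = 1 := by simp [ha, poch]
    rw [this]
  -- a n → 0
  have hatend : Filter.Tendsto a Filter.atTop (nhds 0) := by
    have hev : ∀ᶠ n in Filter.atTop, ‖a n‖ ≤ |c| / ((n:ℝ) - 1) := by
      filter_upwards [Filter.eventually_ge_atTop 2] with n hn
      exact habs_le n hn
    have hgt : Filter.Tendsto (fun n : ℕ => |c| / ((n:ℝ) - 1)) Filter.atTop (nhds 0) := by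
      apply Filter.Tendsto.div_atTop tendsto_const_nhds
      have : Filter.Tendsto (fun n : ℕ => (n:ℝ)) Filter.atTop Filter.atTop :=
        tendsto_natCast_atTop_atTop
      simpa [sub_eq_add_neg] using Filter.tendsto_atTop_add_const_right Filter.atTop (-1) this
    exact squeeze_zero_norm' hev hgt
  have hm1 : ((m:ℝ)+1) ≠ 0 := by positivity
  have hlim : Filter.Tendsto (fun n => ∑ k ∈ Finset.range n, term k)
      Filter.atTop (nhds (1 / ((m:ℝ)+1))) := by
    simp only [hpartial]
    have : Filter.Tendsto (fun n => (1 - a n) / ((m:ℝ)+1)) Filter.atTop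
        (nhds ((1 - 0) / ((m:ℝ)+1))) :=
      (tendsto_const_nhds.sub hatend).div_const _
    simpa using this
  have hs : Summable term := hsummable.of_abs
  have := hs.hasSum.tendsto_sum_nat
  exact (tendsto_nhds_unique hlim this)
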